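/- Data-processing inequality for the maximum causal effect: for arbitrary quantum channels A : A' → A, N : A → B, and B : B → B' between finite-dimensional quantum systems, one has CE_max(B ∘ N ∘ A) ≤ CE_max(N). -/

import Mathlib

/-!
Writing a Hermitian `X` as `X⁺ - X⁻` gives `‖X‖₁ = tr X⁺ + tr X⁻`, and for positive semidefinite
`A`, `B` pairing `A - B` with its sign `S` (so `-1 ≤ S ≤ 1`) gives `‖A - B‖₁ ≤ tr A + tr B`. As a
channel preserves positivity and trace, it therefore contracts the trace norm of Hermitian
matrices. Hence post-processing can only shrink the numerator `‖N σ - N σ'‖₁` and pre-processing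
can only shrink the denominator: each ratio of `post ∘ N ∘ pre` is bounded by the ratio of `N` at
`(pre ρ, pre ρ')`, or vanishes when `pre ρ = pre ρ'`.
-/


open Matrix ComplexOrder

/-- Trace norm of a square complex matrix. -/
noncomputable def traceNorm {n : Type*} [Fintype n] [DecidableEq n]
    (X : Matrix n n ℂ) : ℝ :=
  (((Matrix.posSemidef_conjTranspose_mul_self X).1.eigenvectorUnitary.1 *
      diagonal (((↑) : ℝ → ℂ) ∘ Real.sqrt ∘ (Matrix.posSemidef_conjTranspose_mul_self X).1.eigenvalues) *
      (star (Matrix.posSemidef_conjTranspose_mul_self X).1.eigenvectorUnitary :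
        Matrix n n ℂ)).trace).re

/-- A density matrix: positive semidefinite with unit trace. -/
def IsDensityMatrix {n : Type*} [Fintype n] [DecidableEq n] (ρ : Matrix n n ℂ) : Prop :=
  ρ.PosSemidef ∧ ρ.trace = 1

/-- A quantum channel: a linear map admitting a Kraus representation. -/
def IsQuantumChannel {dA dB : ℕ}
    (N : Matrix (Fin dA) (Fin dA) ℂ →ₗ[ℂ] Matrix (Fin dB) (Fin dB) ℂ) : Prop :=
  ∃ (k : ℕ) (K : Fin k → Matrix (Fin dB) (Fin dA) ℂ),
    (∀ X, N X = ∑ i, K i * X * (K i)ᴴ) ∧ (∑ i, (K i)ᴴ * K i = 1)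

/-- Maximum causal effect. -/
noncomputable def CEmax {dA dB : ℕ}
    (N : Matrix (Fin dA) (Fin dA) ℂ →ₗ[ℂ] Matrix (Fin dB) (Fin dB) ℂ) : ℝ :=
  sSup {x : ℝ | ∃ ρ ρ' : Matrix (Fin dA) (Fin dA) ℂ,
    IsDensityMatrix ρ ∧ IsDensityMatrix ρ' ∧ ρ ≠ ρ' ∧
    x = traceNorm (N ρ - N ρ') / traceNorm (ρ - ρ')}

/-- Minimum causal effect. -/
noncomputable def CEmin {dA dB : ℕ}
    (N : Matrix (Fin dA) (Fin dA) ℂ →ₗ[ℂ] Matrix (Fin dB) (Fin dB) ℂ) : ℝ :=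
  sInf {x : ℝ | ∃ ρ ρ' : Matrix (Fin dA) (Fin dA) ℂ,
    IsDensityMatrix ρ ∧ IsDensityMatrix ρ' ∧ ρ ≠ ρ' ∧
    x = traceNorm (N ρ - N ρ') / traceNorm (ρ - ρ')}

/-- Minimum distinguishability preservation. -/
noncomputable def DPmin {dA dB : ℕ}
    (N : Matrix (Fin dA) (Fin dA) ℂ →ₗ[ℂ] Matrix (Fin dB) (Fin dB) ℂ) : ℝ :=
  sInf {x : ℝ | ∃ p : ℝ, 0 ≤ p ∧ p ≤ 1 ∧
    ∃ ρ ρ' : Matrix (Fin dA) (Fin dA) ℂ,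
      IsDensityMatrix ρ ∧ IsDensityMatrix ρ' ∧ ρ ≠ ρ' ∧
      x = traceNorm ((p : ℂ) • N ρ - ((1 - p : ℝ) : ℂ) • N ρ') /
          traceNorm ((p : ℂ) • ρ - ((1 - p : ℝ) : ℂ) • ρ')}

open scoped MatrixOrder

namespace Matrix

variable {n 𝕜 : Type*} [Fintype n] [DecidableEq n] [RCLike 𝕜]

lemma PosSemidef.trace_mul_nonneg {A B : Matrix n n 𝕜} (hA : A.PosSemidef) (hB : B.PosSemidef) :
    0 ≤ (A * B).trace := by
  have hsqrt : (CFC.sqrt A)ᴴ = CFC.sqrt A := (CFC.sqrt_nonneg A).posSemidef.isHermitian.eq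
  calc 0 ≤ (CFC.sqrt A * B * (CFC.sqrt A)ᴴ).trace :=
        (hB.mul_mul_conjTranspose_same _).trace_nonneg
    _ = (A * B).trace := by
        rw [hsqrt, trace_mul_cycle, CFC.sqrt_mul_sqrt_self A hA.nonneg]

lemma trace_mul_le_trace_of_le_one {T A : Matrix n n 𝕜} (hT : T ≤ 1) (hA : A.PosSemidef) :
    (T * A).trace ≤ A.trace := by
  have := (Matrix.nonneg_iff_posSemidef.mp (sub_nonneg.mpr hT)).trace_mul_nonneg hA
  rwa [Matrix.sub_mul, Matrix.one_mul, trace_sub, sub_nonneg] at this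

end Matrix

section TraceNorm

variable {n : Type*} [Fintype n] [DecidableEq n]

theorem traceNorm_eq_re_trace_abs (X : Matrix n n ℂ) : traceNorm X = (CFC.abs X).trace.re := by
  have hXX := posSemidef_conjTranspose_mul_self X
  rw [CFC.abs, star_eq_conjTranspose X, CFC.sqrt_eq_real_sqrt _ hXX.nonneg, cfcₙ_eq_cfc,
    hXX.1.cfc_eq, IsHermitian.cfc, Unitary.conjStarAlgAut_apply]
  rfl

theorem traceNorm_nonneg (X : Matrix n n ℂ) : 0 ≤ traceNorm X := by
  rw [traceNorm_eq_re_trace_abs]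
  exact (Complex.nonneg_iff.mp (CFC.abs_nonneg X).posSemidef.trace_nonneg).1

theorem traceNorm_eq_zero_iff {X : Matrix n n ℂ} : traceNorm X = 0 ↔ X = 0 := by
  have habs : (CFC.abs X).PosSemidef := (CFC.abs_nonneg X).posSemidef
  have habs_eq_zero : CFC.abs X = 0 ↔ X = 0 := by
    rw [← conjTranspose_mul_self_eq_zero (A := X), ← star_eq_conjTranspose, ← CFC.abs_mul_abs]
    nth_rewrite 2 [← habs.1.eq]
    exact conjTranspose_mul_self_eq_zero.symm
  rw [traceNorm_eq_re_trace_abs, ← habs_eq_zero, ← habs.trace_eq_zero_iff]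
  obtain ⟨-, him⟩ := Complex.nonneg_iff.mp habs.trace_nonneg
  constructor
  · intro h; exact Complex.ext h him.symm
  · intro h; rw [h, Complex.zero_re]

theorem traceNorm_pos {X : Matrix n n ℂ} (hX : X ≠ 0) : 0 < traceNorm X :=
  (traceNorm_nonneg X).lt_of_ne' (traceNorm_eq_zero_iff.not.mpr hX)

theorem Matrix.IsHermitian.traceNorm_eq_posPart_add_negPart {X : Matrix n n ℂ}
    (hX : X.IsHermitian) :
    traceNorm X = (X⁺).trace.re + (X⁻).trace.re := by
  rw [traceNorm_eq_re_trace_abs, ← CFC.posPart_add_negPart X hX.isSelfAdjoint, trace_add,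
    Complex.add_re]

theorem Matrix.PosSemidef.traceNorm_sub_le {A B : Matrix n n ℂ} (hA : A.PosSemidef)
    (hB : B.PosSemidef) :
    traceNorm (A - B) ≤ A.trace.re + B.trace.re := by
  set X := A - B
  have hX : IsSelfAdjoint X := (hA.1.sub hB.1).isSelfAdjoint
  have hfin : (spectrum ℝ X).Finite := finite_real_spectrum
  set S := cfc (fun x : ℝ => (SignType.sign x : ℝ)) X
  have hSX : S * X = CFC.abs X := by
    rw [CFC.abs_eq_cfc_norm X hX]
    conv_lhs => rw [← cfc_id' ℝ X]
    rw [← cfc_mul _ _ X (hfin.continuousOn _)]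
    exact cfc_congr fun x _ => by simp [Real.norm_eq_abs, sign_mul_self]
  have hsign (x : ℝ) : |(SignType.sign x : ℝ)| ≤ 1 := by
    rcases lt_trichotomy x 0 with h | rfl | h <;> simp [*]
  have hS : S ≤ 1 := cfc_le_one _ X fun x _ => (abs_le.mp (hsign x)).2
  have hnegS : -S ≤ 1 := by
    rw [← cfc_neg]
    exact cfc_le_one _ X fun x _ => neg_le.mp (abs_le.mp (hsign x)).1
  calc traceNorm X = (S * A).trace.re + (-S * B).trace.re := by
        rw [traceNorm_eq_re_trace_abs, ← hSX, Matrix.mul_sub, neg_mul, trace_neg, trace_sub,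
          Complex.sub_re, Complex.neg_re, sub_eq_add_neg]
    _ ≤ A.trace.re + B.trace.re :=
        add_le_add (Complex.le_def.mp (trace_mul_le_trace_of_le_one hS hA)).1
          (Complex.le_def.mp (trace_mul_le_trace_of_le_one hnegS hB)).1

end TraceNorm

namespace IsQuantumChannel

variable {dA dB : ℕ} {N : Matrix (Fin dA) (Fin dA) ℂ →ₗ[ℂ] Matrix (Fin dB) (Fin dB) ℂ}

theorem posSemidef_map (hN : IsQuantumChannel N) {ρ : Matrix (Fin dA) (Fin dA) ℂ}
    (hρ : ρ.PosSemidef) : (N ρ).PosSemidef := by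
  obtain ⟨k, K, hK, -⟩ := hN
  rw [hK]
  exact Finset.sum_induction _ _ (fun _ _ => .add) .zero
    fun i _ => hρ.mul_mul_conjTranspose_same (K i)

theorem trace_map (hN : IsQuantumChannel N) (ρ : Matrix (Fin dA) (Fin dA) ℂ) :
    (N ρ).trace = ρ.trace := by
  obtain ⟨k, K, hK, hcomplete⟩ := hN
  calc (N ρ).trace = ∑ i, ((K i)ᴴ * K i * ρ).trace := by
        rw [hK, trace_sum]
        exact Finset.sum_congr rfl fun i _ => trace_mul_cycle _ _ _
    _ = ρ.trace := by rw [← trace_sum, ← Finset.sum_mul, hcomplete, Matrix.one_mul]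

theorem isDensityMatrix_map (hN : IsQuantumChannel N) {ρ : Matrix (Fin dA) (Fin dA) ℂ}
    (hρ : IsDensityMatrix ρ) : IsDensityMatrix (N ρ) :=
  ⟨hN.posSemidef_map hρ.1, by rw [hN.trace_map, hρ.2]⟩

theorem traceNorm_map_le (hN : IsQuantumChannel N) {X : Matrix (Fin dA) (Fin dA) ℂ}
    (hX : X.IsHermitian) : traceNorm (N X) ≤ traceNorm X := by
  have hpos : (X⁺).PosSemidef := (CFC.posPart_nonneg X).posSemidef
  have hneg : (X⁻).PosSemidef := (CFC.negPart_nonneg X).posSemidef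
  calc traceNorm (N X) = traceNorm (N X⁺ - N X⁻) := by
        rw [← map_sub, CFC.posPart_sub_negPart X hX.isSelfAdjoint]
    _ ≤ (N X⁺).trace.re + (N X⁻).trace.re :=
        (hN.posSemidef_map hpos).traceNorm_sub_le (hN.posSemidef_map hneg)
    _ = traceNorm X := by rw [hN.trace_map, hN.trace_map, hX.traceNorm_eq_posPart_add_negPart]

theorem traceNorm_map_sub_le (hN : IsQuantumChannel N) {ρ ρ' : Matrix (Fin dA) (Fin dA) ℂ}
    (hρ : ρ.IsHermitian) (hρ' : ρ'.IsHermitian) :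
    traceNorm (N ρ - N ρ') ≤ traceNorm (ρ - ρ') := by
  rw [← map_sub]
  exact hN.traceNorm_map_le (hρ.sub hρ')

end IsQuantumChannel

theorem CEmax_nonneg {dA dB : ℕ} (N : Matrix (Fin dA) (Fin dA) ℂ →ₗ[ℂ] Matrix (Fin dB) (Fin dB) ℂ) :
    0 ≤ CEmax N :=
  Real.sSup_nonneg fun _ ⟨_, _, _, _, _, hx⟩ =>
    hx ▸ div_nonneg (traceNorm_nonneg _) (traceNorm_nonneg _)

theorem le_CEmax {dA dB : ℕ}
    {N : Matrix (Fin dA) (Fin dA) ℂ →ₗ[ℂ] Matrix (Fin dB) (Fin dB) ℂ}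
    (hN : IsQuantumChannel N) {ρ ρ' : Matrix (Fin dA) (Fin dA) ℂ}
    (hρ : IsDensityMatrix ρ) (hρ' : IsDensityMatrix ρ') (hne : ρ ≠ ρ') :
    traceNorm (N ρ - N ρ') / traceNorm (ρ - ρ') ≤ CEmax N := by
  refine le_csSup ⟨1, ?_⟩ ⟨ρ, ρ', hρ, hρ', hne, rfl⟩
  rintro _ ⟨σ, σ', hσ, hσ', -, rfl⟩
  exact div_le_one_of_le₀ (hN.traceNorm_map_sub_le hσ.1.1 hσ'.1.1) (traceNorm_nonneg _)

/-- **Data-processing inequality for the maximum causal effect.**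
For arbitrary quantum channels `pre : A' → A`, `N : A → B`, and `post : B → B'`,
one has `CEmax (post ∘ N ∘ pre) ≤ CEmax N`. -/
theorem CEmax_data_processing {dA' dA dB dB' : ℕ}
    (pre : Matrix (Fin dA') (Fin dA') ℂ →ₗ[ℂ] Matrix (Fin dA) (Fin dA) ℂ)
    (N : Matrix (Fin dA) (Fin dA) ℂ →ₗ[ℂ] Matrix (Fin dB) (Fin dB) ℂ)
    (post : Matrix (Fin dB) (Fin dB) ℂ →ₗ[ℂ] Matrix (Fin dB') (Fin dB') ℂ)
    (hpre : IsQuantumChannel pre) (hN : IsQuantumChannel N)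
    (hpost : IsQuantumChannel post) :
    CEmax (post ∘ₗ N ∘ₗ pre) ≤ CEmax N := by
  refine Real.sSup_le ?_ (CEmax_nonneg N)
  rintro _ ⟨ρ, ρ', hρ, hρ', -, rfl⟩
  have hσ := hpre.isDensityMatrix_map hρ
  have hσ' := hpre.isDensityMatrix_map hρ'
  change traceNorm (post (N (pre ρ)) - post (N (pre ρ'))) / traceNorm (ρ - ρ') ≤ CEmax N
  rcases eq_or_ne (pre ρ) (pre ρ') with heq | hne
  · rw [heq, sub_self, traceNorm_eq_zero_iff.mpr rfl, zero_div]
    exact CEmax_nonneg N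
  · calc _ ≤ traceNorm (N (pre ρ) - N (pre ρ')) / traceNorm (pre ρ - pre ρ') :=
          div_le_div₀ (traceNorm_nonneg _)
            (hpost.traceNorm_map_sub_le (hN.isDensityMatrix_map hσ).1.1
              (hN.isDensityMatrix_map hσ').1.1)
            (traceNorm_pos (sub_ne_zero.mpr hne)) (hpre.traceNorm_map_sub_le hρ.1.1 hρ'.1.1)
      _ ≤ CEmax N := le_CEmax hN hσ hσ' hne
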